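/- If M is a finite monoid, s, x, y ∈ M, s is L-equivalent to xs, and x ∼_D y, then xs = ys. Here x ∼_D y means: for every idempotent f ∈ M, either both xf and yf are strictly J-below f, or xf = yf. -/
import Mathlib


variable {M : Type*}

lemma exists_idem_pow [Monoid M] [Finite M] (a : M) :
    ∃ n > 0, a ^ n * a ^ n = a ^ n := by
  obtain ⟨i, j, hij, h⟩ := Finite.exists_ne_map_eq_of_infinite (fun n : ℕ => a ^ n)
  wlog hlt : i < j generalizing i j
  · exact this j i hij.symm h.symm (by omega)
  set d := j - i with hd
  have hd0 : 0 < d := by omega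
  have key : ∀ k m, i ≤ m → a ^ (m + k * d) = a ^ m := by
    intro k
    induction k with
    | zero => simp
    | succ k ih =>
      intro m hm
      have h1 : a ^ (m + d) = a ^ m := by
        have : a ^ (m + d) = a ^ (m - i) * a ^ j := by
          rw [← pow_add]; congr 1; omega
        rw [this, ← h, ← pow_add]; congr 1; omega
      calc a ^ (m + (k+1) * d) = a ^ (m + d + k * d) := by ring_nf
        _ = a ^ (m + d) := ih _ (by omega)
        _ = a ^ m := h1
  refine ⟨(i + 1) * d, by positivity, ?_⟩
  rw [← pow_add]
  have := key (i+1) ((i+1)*d) (by nlinarith)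
  rw [← this]

def lLe [Monoid M] (u v : M) : Prop := ∃ p, u = p * v
def lEq [Monoid M] (u v : M) : Prop := lLe u v ∧ lLe v u
def jLe [Monoid M] (u v : M) : Prop := ∃ p q, u = p * v * q
def jLt [Monoid M] (u v : M) : Prop := jLe u v ∧ ¬ jLe v u
def simD [Monoid M] (x y : M) : Prop :=
  ∀ f : M, f * f = f → (jLt (x * f) f ∧ jLt (y * f) f) ∨ x * f = y * f

theorem stmt1 [Monoid M] [Finite M] (s x y : M)
    (hL : lEq s (x * s)) (hD : simD x y) : x * s = y * s := by
  obtain ⟨⟨u, hu⟩, _⟩ := hL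
  have hk : ∀ k, (u * x) ^ k * s = s := by
    intro k
    induction k with
    | zero => simp
    | succ k ih => rw [pow_succ', mul_assoc, ih, mul_assoc, ← hu]
  obtain ⟨n, hn0, hidem⟩ := exists_idem_pow (u * x)
  set e := (u * x) ^ n with he
  have hes : e * s = s := hk n
  have key : e = u * (x * e) * (u * x) ^ (n - 1) := by
    rw [he, ← mul_assoc u x, ← pow_succ', ← pow_add]
    have h1 : n + 1 + (n - 1) = n + n := by omega
    rw [h1, pow_add, hidem]
  rcases hD e hidem with ⟨⟨_, hnot⟩, _⟩ | heq
  · exact absurd ⟨u, (u * x) ^ (n - 1), key⟩ hnot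
  · calc x * s = x * (e * s) := by rw [hes]
      _ = x * e * s := by rw [mul_assoc]
      _ = y * e * s := by rw [heq]
      _ = y * (e * s) := by rw [mul_assoc]
      _ = y * s := by rw [hes]
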